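/- Let β > 0 and define G_β(z) = Σ_{n≥0} z^{nβ} / Γ(nβ + 1) for z ≥ 0. Then the series converges for all z ≥ 0, and there is a constant C (depending on β) such that G_β(z) ≤ C e^z / β for all z ≥ 0. -/

import Mathlib

open Real Finset
open scoped Nat

/-!
Log-convexity of `Γ` gives `Γ(m + 1 + t) ≥ m! · m ^ t` for `m ≥ 1`, `t ≥ 0`, and together with
weighted AM-GM this bounds `z ^ x / Γ(x + 1)` by `2 (z ^ m / m! + z ^ (m + 1) / (m + 1)!)`, where
`m = ⌊x⌋`. At most `⌈1/β⌉` indices `n` share the value `⌊nβ⌋`, so every partial sum of the series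
is at most `4 ⌈1/β⌉ e ^ z`; this gives both summability and the bound with `C = 4 ⌈1/β⌉ β`.
-/

lemma one_le_two_mul_Gamma_add_one {t : ℝ} (ht0 : 0 ≤ t) (ht1 : t ≤ 1) :
    1 ≤ 2 * Gamma (t + 1) := by
  have hmono : Gamma 2 ≤ Gamma (t + 1 + 1) :=
    Gamma_strictMonoOn_Ici.monotoneOn (by simp) (by simp; linarith) (by linarith)
  rw [Gamma_two, Gamma_add_one (by linarith)] at hmono
  nlinarith [Gamma_pos_of_pos (show 0 < t + 1 by linarith)]

lemma factorial_mul_rpow_le_Gamma {m : ℕ} (hm : 1 ≤ m) {t : ℝ} (ht : 0 ≤ t) :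
    (m ! : ℝ) * (m : ℝ) ^ t ≤ Gamma (m + 1 + t) := by
  rcases ht.eq_or_lt with rfl | ht
  · simp [← Gamma_nat_eq_factorial]
  have hlog : log (Gamma (m + 1)) + t * log m ≤ log (Gamma (m + 1 + t)) := by
    have := BohrMollerup.f_add_nat_ge convexOn_log_Gamma (n := m + 1) (fun {y} hy => by
      rw [Function.comp_apply, Gamma_add_one hy.ne', log_mul hy.ne' (Gamma_pos_of_pos hy).ne',
        add_comm, Function.comp_apply]) (by omega) ht
    simpa using this
  have hm0 : (0 : ℝ) < m := by exact_mod_cast hm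
  calc (m ! : ℝ) * (m : ℝ) ^ t = exp (log (Gamma (m + 1)) + t * log m) := by
        rw [exp_add, exp_log (Gamma_pos_of_pos (by positivity)), rpow_def_of_pos hm0, mul_comm t,
          Gamma_nat_eq_factorial]
    _ ≤ exp (log (Gamma (m + 1 + t))) := exp_le_exp.2 hlog
    _ = Gamma (m + 1 + t) := exp_log (Gamma_pos_of_pos (by positivity))

lemma rpow_le_one_sub_add_mul {y t : ℝ} (hy : 0 ≤ y) (ht0 : 0 ≤ t) (ht1 : t ≤ 1) :
    y ^ t ≤ 1 - t + t * y := by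
  simpa using geom_mean_le_arith_mean2_weighted (sub_nonneg.2 ht1) ht0 zero_le_one hy (by ring)

lemma rpow_div_Gamma_add_one_le {z x : ℝ} (hz : 0 ≤ z) (hx : 0 ≤ x) :
    z ^ x / Gamma (x + 1) ≤ 2 * (z ^ ⌊x⌋₊ / ⌊x⌋₊ ! + z ^ (⌊x⌋₊ + 1) / (⌊x⌋₊ + 1)!) := by
  set m := ⌊x⌋₊
  set t := x - m
  have ht0 : 0 ≤ t := sub_nonneg.2 (Nat.floor_le hx)
  have ht1 : t ≤ 1 := by linarith [Nat.lt_floor_add_one x]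
  have hx' : x = m + t := by ring
  rcases Nat.eq_zero_or_pos m with hm | hm
  · have hxt : x = t := by simp [hx', hm]
    have hG := one_le_two_mul_Gamma_add_one ht0 ht1
    have hzt := rpow_le_one_sub_add_mul hz ht0 ht1
    rw [hm, hxt, div_le_iff₀ (Gamma_pos_of_pos (by linarith))]
    simp only [pow_zero, Nat.factorial_zero, Nat.cast_one, div_one, zero_add, pow_one,
      Nat.factorial_one]
    nlinarith
  · have hm0 : (0 : ℝ) < m := by exact_mod_cast hm
    have hG : (m ! : ℝ) * (m : ℝ) ^ t ≤ Gamma (x + 1) := by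
      rw [hx', add_right_comm]; exact factorial_mul_rpow_le_Gamma hm ht0
    have hsucc : ((m + 1)! : ℝ) = (m + 1) * m ! := by push_cast [Nat.factorial_succ]; ring
    have hm1 : ((m : ℝ) + 1) / m ≤ 2 := by
      rw [div_le_iff₀ hm0]; linarith [show (1 : ℝ) ≤ m by exact_mod_cast hm]
    calc z ^ x / Gamma (x + 1) ≤ z ^ x / ((m ! : ℝ) * (m : ℝ) ^ t) :=
          div_le_div_of_nonneg_left (by positivity) (by positivity) hG
      _ = z ^ m / m ! * (z / m) ^ t := by
          rw [hx', rpow_add' hz (by positivity), rpow_natCast, div_rpow hz hm0.le]; ring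
      _ ≤ z ^ m / m ! * (1 - t + t * (z / m)) := by
          gcongr; exact rpow_le_one_sub_add_mul (by positivity) ht0 ht1
      _ ≤ z ^ m / m ! + (m + 1) / m * (z ^ (m + 1) / (m + 1)!) := by
          rw [hsucc, pow_succ]
          field_simp
          exact mul_le_mul_of_nonneg_left (by nlinarith) (pow_nonneg hz m)
      _ ≤ z ^ m / m ! + 2 * (z ^ (m + 1) / (m + 1)!) := by gcongr
      _ ≤ _ := by linarith [show 0 ≤ z ^ m / (m ! : ℝ) by positivity]

lemma sum_pow_div_factorial_le_exp {z : ℝ} (hz : 0 ≤ z) (s : Finset ℕ) :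
    ∑ k ∈ s, z ^ k / k ! ≤ exp z :=
  sum_le_hasSum s (fun _ _ => by positivity) <| by
    rw [exp_eq_exp_ℝ]; exact NormedSpace.expSeries_div_hasSum_exp z

lemma sum_pow_succ_div_factorial_le_exp {z : ℝ} (hz : 0 ≤ z) (s : Finset ℕ) :
    ∑ k ∈ s, z ^ (k + 1) / (k + 1)! ≤ exp z := by
  simpa using sum_pow_div_factorial_le_exp hz (s.map (addRightEmbedding 1))

lemma card_filter_floor_mul_eq_le {β : ℝ} (hβ : 0 < β) (s : Finset ℕ) (k : ℕ) :
    #(s.filter fun n : ℕ => ⌊(n : ℝ) * β⌋₊ = k) ≤ ⌈1 / β⌉₊ := by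
  have hsub : s.filter (fun n : ℕ => ⌊(n : ℝ) * β⌋₊ = k) ⊆ Ico ⌈k / β⌉₊ ⌈(k + 1) / β⌉₊ := by
    intro n hn
    have hk := (mem_filter.1 hn).2
    have hlo : (k : ℝ) ≤ n * β := hk ▸ Nat.floor_le (by positivity)
    have hhi : (n : ℝ) * β < k + 1 := by exact_mod_cast hk ▸ Nat.lt_floor_add_one ((n : ℝ) * β)
    rw [mem_Ico, Nat.ceil_le, Nat.lt_ceil, div_le_iff₀ hβ, lt_div_iff₀ hβ]
    exact ⟨hlo, hhi⟩
  have hceil : ⌈(k + 1) / β⌉₊ ≤ ⌈k / β⌉₊ + ⌈1 / β⌉₊ := by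
    rw [add_div]; exact Nat.ceil_add_le _ _
  grw [card_le_card hsub, Nat.card_Ico]
  omega

lemma sum_rpow_mul_div_Gamma_le {β : ℝ} (hβ : 0 < β) {z : ℝ} (hz : 0 ≤ z) (s : Finset ℕ) :
    ∑ n ∈ s, z ^ ((n : ℝ) * β) / Gamma ((n : ℝ) * β + 1) ≤ 4 * ⌈1 / β⌉₊ * exp z := by
  set F : ℕ → ℝ := fun k => z ^ k / k ! + z ^ (k + 1) / (k + 1)!
  have hF : ∀ k, 0 ≤ F k := fun k => by positivity
  have hFsum : ∀ t : Finset ℕ, ∑ k ∈ t, F k ≤ 2 * exp z := fun t => by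
    rw [sum_add_distrib, two_mul]
    exact add_le_add (sum_pow_div_factorial_le_exp hz t) (sum_pow_succ_div_factorial_le_exp hz t)
  calc ∑ n ∈ s, z ^ ((n : ℝ) * β) / Gamma ((n : ℝ) * β + 1)
      ≤ ∑ n ∈ s, 2 * F ⌊(n : ℝ) * β⌋₊ :=
        sum_le_sum fun n _ => rpow_div_Gamma_add_one_le hz (by positivity)
    _ = 2 * ∑ k ∈ s.image (fun n : ℕ => ⌊(n : ℝ) * β⌋₊),
          #(s.filter fun n : ℕ => ⌊(n : ℝ) * β⌋₊ = k) • F k := by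
        rw [← mul_sum, sum_comp]
    _ ≤ 2 * ∑ k ∈ s.image (fun n : ℕ => ⌊(n : ℝ) * β⌋₊), ⌈1 / β⌉₊ • F k := by
        gcongr with k
        exact card_filter_floor_mul_eq_le hβ s k
    _ ≤ 2 * (⌈1 / β⌉₊ * (2 * exp z)) := by
        rw [← smul_sum, nsmul_eq_mul]
        gcongr
        exact hFsum _
    _ = 4 * ⌈1 / β⌉₊ * exp z := by ring

theorem stmt17 (β : ℝ) (hβ : 0 < β) :
    (∀ z ≥ (0 : ℝ), Summable (fun n : ℕ => z ^ ((n : ℝ) * β) / Real.Gamma ((n : ℝ) * β + 1))) ∧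
      ∃ C > (0 : ℝ), ∀ z ≥ (0 : ℝ),
        (∑' n : ℕ, z ^ ((n : ℝ) * β) / Real.Gamma ((n : ℝ) * β + 1)) ≤
          C * Real.exp z / β := by
  have hterm_nonneg : ∀ z ≥ (0 : ℝ),
      0 ≤ fun n : ℕ => z ^ ((n : ℝ) * β) / Gamma ((n : ℝ) * β + 1) :=
    fun z hz n => div_nonneg (by positivity) (Gamma_pos_of_pos (by positivity)).le
  refine ⟨fun z hz => summable_of_sum_le (hterm_nonneg z hz) (sum_rpow_mul_div_Gamma_le hβ hz),
    4 * ⌈1 / β⌉₊ * β, by positivity, fun z hz => ?_⟩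
  rw [mul_right_comm, mul_div_cancel_right₀ _ hβ.ne']
  exact Real.tsum_le_of_sum_le (hterm_nonneg z hz) (sum_rpow_mul_div_Gamma_le hβ hz)
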